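/- arXiv:2112.07852 — 2 statements merged into one kernel-verified Lean document; each statement's English description precedes it below -/
import Mathlib

section
/- A smooth 2π-periodic function F: S¹ → ℝ with zero mean value (∫₀^{2π} F dα = 0) has the property that the function G = F'' + F has at least four zeros in [0, 2π), provided G is not identically zero. -/
/-! Integrating by parts twice, `∫ (F'' + F) t = ∫ F (t'' + t)` for every `2π`-periodic `C²`
function `t`. For `t = c₀ + c₁ cos + c₂ sin` we have `t'' + t = c₀`, so `G = F'' + F` is orthogonal
to `1`, `cos` and `sin`, and the Sturm–Hurwitz argument applies. Let `[a, b]` be a maximal interval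
around a positive value of `G` on which `G ≥ 0`. If `G ≤ 0` on the rest `[b, a + 2π]` of the
period, then `G` has the sign of `t(x) = sin ((x - a) / 2) sin ((b - x) / 2)`, which is of the form
`c₀ + c₁ cos x + c₂ sin x`, so `∫ G t > 0`, contradicting orthogonality. Otherwise a positive value
in `(b, a + 2π)`, squeezed between the negative values that accumulate at `b` and at `a + 2π`,
gives two more zeros. -/

open Real Set Function

theorem Function.Periodic.deriv {f : ℝ → ℝ} {T : ℝ} (hf : Periodic f T) : Periodic (deriv f) T :=
  fun x => by rw [← deriv_comp_add_const, hf.funext]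

theorem intervalIntegral_deriv_mul_eq_neg_of_periodic {f g : ℝ → ℝ} {T : ℝ} (hf : ContDiff ℝ 1 f)
    (hg : ContDiff ℝ 1 g) (hfT : Periodic f T) (hgT : Periodic g T) :
    ∫ x in 0..T, deriv f x * g x = -∫ x in 0..T, f x * deriv g x := by
  have hparts := intervalIntegral.integral_mul_deriv_eq_deriv_mul
    (fun x _ => (hf.differentiable one_ne_zero x).hasDerivAt)
    (fun x _ => (hg.differentiable one_ne_zero x).hasDerivAt)
    ((hf.continuous_deriv le_rfl).intervalIntegrable 0 T)
    ((hg.continuous_deriv le_rfl).intervalIntegrable 0 T)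
  rw [show f T = f 0 by simpa using hfT 0, show g T = g 0 by simpa using hgT 0, sub_self,
    zero_sub] at hparts
  rw [hparts, neg_neg]

theorem intervalIntegral_deriv_deriv_mul_eq_of_periodic {f g : ℝ → ℝ} {T : ℝ} (hf : ContDiff ℝ 2 f)
    (hg : ContDiff ℝ 2 g) (hfT : Periodic f T) (hgT : Periodic g T) :
    ∫ x in 0..T, deriv (deriv f) x * g x = ∫ x in 0..T, f x * deriv (deriv g) x := by
  rw [intervalIntegral_deriv_mul_eq_neg_of_periodic hf.deriv' (hg.of_le one_le_two) hfT.deriv hgT,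
    intervalIntegral_deriv_mul_eq_neg_of_periodic (hf.of_le one_le_two) hg.deriv' hfT hgT.deriv,
    neg_neg]

theorem intervalIntegral_deriv_deriv_add_mul_trig_eq_zero {F : ℝ → ℝ} (hF : ContDiff ℝ 2 F)
    (hper : Periodic F (2 * π)) (hmean : ∫ x in 0..2 * π, F x = 0) (c₀ c₁ c₂ : ℝ) :
    ∫ x in 0..2 * π, (deriv (deriv F) x + F x) * (c₀ + c₁ * cos x + c₂ * sin x) = 0 := by
  set g : ℝ → ℝ := fun x => c₀ + c₁ * cos x + c₂ * sin x
  have hg : ContDiff ℝ 2 g := by fun_prop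
  have hgT : Periodic g (2 * π) := fun x => by simp only [g, cos_add_two_pi, sin_add_two_pi]
  have hg' : deriv g = fun x => c₂ * cos x - c₁ * sin x := funext fun x =>
    (((hasDerivAt_cos x).const_mul c₁).const_add c₀ |>.add
      ((hasDerivAt_sin x).const_mul c₂)).deriv.trans (by ring)
  have hg'' : ∀ x, deriv (deriv g) x + g x = c₀ := fun x => by
    have hd : HasDerivAt (fun x => c₂ * cos x - c₁ * sin x) (c₂ * -sin x - c₁ * cos x) x :=
      ((hasDerivAt_cos x).const_mul c₂).sub ((hasDerivAt_sin x).const_mul c₁)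
    rw [hg', hd.deriv]
    ring
  have hcF'' := (hF.deriv' (n := 1)).continuous_deriv le_rfl
  calc ∫ x in 0..2 * π, (deriv (deriv F) x + F x) * g x
      = (∫ x in 0..2 * π, deriv (deriv F) x * g x) + ∫ x in 0..2 * π, F x * g x := by
        simp_rw [add_mul]
        exact intervalIntegral.integral_add ((hcF''.mul hg.continuous).intervalIntegrable _ _)
          ((hF.continuous.mul hg.continuous).intervalIntegrable _ _)
    _ = ∫ x in 0..2 * π, F x * (deriv (deriv g) x + g x) := by
        have hcg'' := (hg.deriv' (n := 1)).continuous_deriv le_rfl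
        rw [intervalIntegral_deriv_deriv_mul_eq_of_periodic hF hg hper hgT]
        simp_rw [mul_add]
        exact (intervalIntegral.integral_add ((hF.continuous.mul hcg'').intervalIntegrable _ _)
          ((hF.continuous.mul hg.continuous).intervalIntegrable _ _)).symm
    _ = 0 := by simp [hg'', hmean]

theorem sin_half_mul_sin_half_eq (u v x : ℝ) :
    sin ((x - u) / 2) * sin ((v - x) / 2) =
      -cos ((v - u) / 2) / 2 + cos ((u + v) / 2) / 2 * cos x + sin ((u + v) / 2) / 2 * sin x := by
  have h₁ := cos_sub ((x - u) / 2) ((v - x) / 2)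
  have h₂ := cos_add ((x - u) / 2) ((v - x) / 2)
  have h₃ := cos_sub x ((u + v) / 2)
  rw [show (x - u) / 2 - (v - x) / 2 = x - (u + v) / 2 by ring] at h₁
  rw [show (x - u) / 2 + (v - x) / 2 = (v - u) / 2 by ring] at h₂
  linarith

theorem periodic_sin_half_mul_sin_half (u v : ℝ) :
    Periodic (fun x => sin ((x - u) / 2) * sin ((v - x) / 2)) (2 * π) := fun x => by
  simp only [show (x + 2 * π - u) / 2 = (x - u) / 2 + π by ring,
    show (v - (x + 2 * π)) / 2 = (v - x) / 2 - π by ring, sin_add_pi, sin_sub_pi, neg_mul_neg]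

theorem mul_sin_half_mul_sin_half_nonneg {G : ℝ → ℝ} {u v x : ℝ} (huv : u ≤ v)
    (hvu : v ≤ u + 2 * π) (hpos : ∀ x ∈ Icc u v, 0 ≤ G x)
    (hneg : ∀ x ∈ Icc v (u + 2 * π), G x ≤ 0) (hx : x ∈ Icc u (u + 2 * π)) :
    0 ≤ G x * (sin ((x - u) / 2) * sin ((v - x) / 2)) := by
  have hsin : 0 ≤ sin ((x - u) / 2) :=
    sin_nonneg_of_nonneg_of_le_pi (by linarith [hx.1]) (by linarith [hx.2])
  rcases le_total x v with hxv | hvx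
  · exact mul_nonneg (hpos x ⟨hx.1, hxv⟩) (mul_nonneg hsin
      (sin_nonneg_of_nonneg_of_le_pi (by linarith) (by linarith [hx.1])))
  · exact mul_nonneg_of_nonpos_of_nonpos (hneg x ⟨hvx, hx.2⟩) (mul_nonpos_of_nonneg_of_nonpos hsin
      (sin_nonpos_of_nonpos_of_neg_pi_le (by linarith) (by linarith [hx.2])))

theorem intervalIntegral_mul_sin_half_mul_sin_half_pos {G : ℝ → ℝ} (hG : Continuous G)
    (hper : Periodic G (2 * π)) {u v p : ℝ} (hup : u < p) (hpv : p < v) (hvu : v ≤ u + 2 * π)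
    (hpos : ∀ x ∈ Icc u v, 0 ≤ G x) (hneg : ∀ x ∈ Icc v (u + 2 * π), G x ≤ 0) (hp : 0 < G p) :
    0 < ∫ x in 0..2 * π, G x * (sin ((x - u) / 2) * sin ((v - x) / 2)) := by
  have hT : Periodic (fun x => G x * (sin ((x - u) / 2) * sin ((v - x) / 2))) (2 * π) :=
    hper.mul (periodic_sin_half_mul_sin_half u v)
  rw [← zero_add (2 * π), ← hT.intervalIntegral_add_eq u 0]
  refine intervalIntegral.integral_pos (by linarith [pi_pos]) (by fun_prop)
    (fun x hx => mul_sin_half_mul_sin_half_nonneg (hup.trans hpv).le hvu hpos hneg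
      (Ioc_subset_Icc_self hx))
    ⟨p, ⟨hup.le, by linarith⟩, mul_pos hp (mul_pos ?_ ?_)⟩
  all_goals exact sin_pos_of_pos_of_lt_pi (by linarith) (by linarith)

theorem exists_zero_nonneg_Icc_of_neg_left {G : ℝ → ℝ} (hG : Continuous G) {q p : ℝ} (hqp : q < p)
    (hq : G q < 0) (hp : 0 < G p) :
    ∃ a ∈ Ioo q p, G a = 0 ∧ (∀ x ∈ Icc a p, 0 ≤ G x) ∧ ∀ y < a, ∃ x ∈ Ioo y a, G x < 0 := by
  set S := {x ∈ Icc q p | G x < 0}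
  have hSne : S.Nonempty := ⟨q, ⟨le_rfl, hqp.le⟩, hq⟩
  have hSbdd : BddAbove S := ⟨p, fun x hx => hx.1.2⟩
  set a := sSup S
  have hqa : q ≤ a := le_csSup hSbdd ⟨⟨le_rfl, hqp.le⟩, hq⟩
  have hGa_nonpos : G a ≤ 0 :=
    closure_minimal (fun x hx => hx.2.le) (isClosed_le hG continuous_const)
      (csSup_mem_closure hSne hSbdd)
  have hap : a < p := lt_of_le_of_ne (csSup_le hSne fun x hx => hx.1.2) fun h => by
    rw [h] at hGa_nonpos; linarith
  have hnonneg : ∀ x ∈ Icc a p, 0 ≤ G x := by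
    rw [← closure_Ioc hap.ne]
    refine closure_minimal (fun x hx => ?_) (isClosed_le continuous_const hG)
    by_contra hx'
    exact (le_csSup hSbdd ⟨⟨hqa.trans hx.1.le, hx.2⟩, not_le.1 hx'⟩).not_gt hx.1
  have hGa : G a = 0 := le_antisymm hGa_nonpos (hnonneg a ⟨le_rfl, hap.le⟩)
  refine ⟨a, ⟨lt_of_le_of_ne hqa fun h => ?_, hap⟩, hGa, hnonneg, fun y hy => ?_⟩
  · exact (h ▸ hq).ne hGa
  · obtain ⟨x, hxS, hyx⟩ := exists_lt_of_lt_csSup hSne hy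
    refine ⟨x, ⟨hyx, lt_of_le_of_ne (le_csSup hSbdd hxS) fun h => ?_⟩, hxS.2⟩
    exact (h ▸ hxS.2).ne hGa

theorem exists_zero_nonneg_Icc_of_neg_right {G : ℝ → ℝ} (hG : Continuous G) {p q : ℝ} (hpq : p < q)
    (hq : G q < 0) (hp : 0 < G p) :
    ∃ b ∈ Ioo p q, G b = 0 ∧ (∀ x ∈ Icc p b, 0 ≤ G x) ∧ ∀ y > b, ∃ x ∈ Ioo b y, G x < 0 := by
  obtain ⟨a, ha, hGa, hnonneg, hneg⟩ := exists_zero_nonneg_Icc_of_neg_left (G := fun x => G (-x))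
    (by fun_prop) (neg_lt_neg hpq) (by simpa using hq) (by simpa using hp)
  refine ⟨-a, ⟨by linarith [ha.2], by linarith [ha.1]⟩, hGa, fun x hx => ?_, fun y hy => ?_⟩
  · simpa using hnonneg (-x) ⟨by linarith [hx.2], by linarith [hx.1]⟩
  · obtain ⟨x, hx, hGx⟩ := hneg (-y) (by linarith)
    exact ⟨-x, ⟨by linarith [hx.2], by linarith [hx.1]⟩, hGx⟩

theorem exists_sign_pattern_or_four_zeros {G : ℝ → ℝ} (hG : Continuous G) {T : ℝ}
    (hper : Periodic G T) (hT : 0 < T) {p q : ℝ} (hp : 0 < G p) (hq : G q < 0) :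
    (∃ u v, u < p ∧ p < v ∧ v < u + T ∧
      (∀ x ∈ Icc u v, 0 ≤ G x) ∧ ∀ x ∈ Icc v (u + T), G x ≤ 0) ∨
    ∃ x₁ x₂ x₃ x₄, x₁ < x₂ ∧ x₂ < x₃ ∧ x₃ < x₄ ∧ x₄ < x₁ + T ∧
      G x₁ = 0 ∧ G x₂ = 0 ∧ G x₃ = 0 ∧ G x₄ = 0 := by
  obtain ⟨q, hq', hGq⟩ := hper.exists_mem_Ico hT q (p - T)
  rw [hGq] at hq
  have hqp : q < p := by linarith [hq'.2]
  have hqT : p < q + T := lt_of_le_of_ne (by linarith [hq'.1]) fun h => by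
    rw [← sub_eq_iff_eq_add.2 h, hper.sub_eq] at hq; linarith
  obtain ⟨a, ha, hGa, hpos_a, hneg_a⟩ := exists_zero_nonneg_Icc_of_neg_left hG hqp hq hp
  obtain ⟨b, hb, hGb, hpos_b, hneg_b⟩ :=
    exists_zero_nonneg_Icc_of_neg_right hG hqT (by rwa [hper]) hp
  by_cases hneg : ∀ x ∈ Icc b (a + T), G x ≤ 0
  · refine .inl ⟨a, b, ha.2, hb.1, by linarith [ha.1, hb.2], fun x hx => ?_, hneg⟩
    rcases le_total x p with hxp | hpx
    exacts [hpos_a x ⟨hx.1, hxp⟩, hpos_b x ⟨hpx, hx.2⟩]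
  obtain ⟨r, hr, hGr⟩ : ∃ r ∈ Icc b (a + T), 0 < G r := by simpa [and_assoc] using hneg
  have hbr : b < r := lt_of_le_of_ne hr.1 fun h => by rw [← h] at hGr; linarith
  have hra : r < a + T := lt_of_le_of_ne hr.2 fun h => by rw [h, hper] at hGr; linarith
  obtain ⟨q₁, hq₁, hGq₁⟩ := hneg_b r hbr
  obtain ⟨q₂, hq₂, hGq₂⟩ := hneg_a (r - T) (by linarith)
  obtain ⟨z₁, hz₁, hGz₁⟩ := intermediate_value_Ioo hq₁.2.le hG.continuousOn ⟨hGq₁, hGr⟩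
  obtain ⟨z₂, hz₂, hGz₂⟩ :=
    intermediate_value_Ioo' (by linarith [hq₂.1] : r ≤ q₂ + T) hG.continuousOn
      ⟨by rwa [hper], hGr⟩
  exact .inr ⟨a, b, z₁, z₂, ha.2.trans hb.1, hq₁.1.trans hz₁.1, hz₁.2.trans hz₂.1,
    by linarith [hz₂.2, hq₂.2], hGa, hGb, hGz₁, hGz₂⟩

theorem exists_neg_of_intervalIntegral_eq_zero {G : ℝ → ℝ} (hG : Continuous G) {T : ℝ}
    (hper : Periodic G T) (hT : 0 < T) (hint : ∫ x in 0..T, G x = 0) {p : ℝ} (hp : 0 < G p) :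
    ∃ q, G q < 0 := by
  by_contra! hnonneg
  have hpos := intervalIntegral.integral_pos (lt_add_of_pos_right p hT) hG.continuousOn
    (fun x _ => hnonneg x) ⟨p, ⟨le_rfl, by linarith⟩, hp⟩
  rw [hper.intervalIntegral_add_eq p 0, zero_add, hint] at hpos
  exact hpos.false

theorem exists_four_zeros_of_orthogonal {G : ℝ → ℝ} (hG : Continuous G) (hper : Periodic G (2 * π))
    (horth : ∀ c₀ c₁ c₂ : ℝ, ∫ x in 0..2 * π, G x * (c₀ + c₁ * cos x + c₂ * sin x) = 0)
    (hG0 : ∃ x, G x ≠ 0) :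
    ∃ x₁ x₂ x₃ x₄, x₁ < x₂ ∧ x₂ < x₃ ∧ x₃ < x₄ ∧ x₄ < x₁ + 2 * π ∧
      G x₁ = 0 ∧ G x₂ = 0 ∧ G x₃ = 0 ∧ G x₄ = 0 := by
  wlog hpos : ∃ p, 0 < G p generalizing G with H
  · obtain ⟨x, hx⟩ := hG0
    have hneg : G x < 0 := lt_of_le_of_ne (not_lt.1 fun h => hpos ⟨x, h⟩) hx
    simpa using H hG.neg (fun x => by simp only [Pi.neg_apply, hper x])
      (fun c₀ c₁ c₂ => by simp [neg_mul, horth]) ⟨x, by simpa using hx⟩ ⟨x, by simpa using hneg⟩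
  obtain ⟨p, hp⟩ := hpos
  obtain ⟨q, hq⟩ := exists_neg_of_intervalIntegral_eq_zero hG hper two_pi_pos
    (by simpa using horth 1 0 0) hp
  rcases exists_sign_pattern_or_four_zeros hG hper two_pi_pos hp hq with
    ⟨u, v, hup, hpv, hvu, hpos, hneg⟩ | hzeros
  · have := intervalIntegral_mul_sin_half_mul_sin_half_pos hG hper hup hpv hvu.le hpos hneg hp
    simp_rw [sin_half_mul_sin_half_eq, horth] at this
    exact (lt_irrefl 0 this).elim
  · exact hzeros

theorem toIcoMod_ne_of_lt_of_lt_add {T : ℝ} (hT : 0 < T) {x y : ℝ} (hxy : x < y) (hyx : y < x + T) :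
    toIcoMod hT 0 x ≠ toIcoMod hT 0 y := by
  intro h
  obtain ⟨n, hn⟩ := (toIcoMod_eq_toIcoMod hT).1 h
  rw [zsmul_eq_mul] at hn
  have h₀ : (0 : ℝ) < n := pos_of_mul_pos_left (hn ▸ sub_pos.2 hxy) hT.le
  have h₁ : (n : ℝ) < 1 := by nlinarith
  norm_cast at h₀ h₁
  omega

theorem exists_four_zeros_Ico_of_window {G : ℝ → ℝ} {T : ℝ} (hper : Periodic G T) (hT : 0 < T)
    {x₁ x₂ x₃ x₄ : ℝ} (h₁₂ : x₁ < x₂) (h₂₃ : x₂ < x₃) (h₃₄ : x₃ < x₄) (h₄₁ : x₄ < x₁ + T)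
    (hx₁ : G x₁ = 0) (hx₂ : G x₂ = 0) (hx₃ : G x₃ = 0) (hx₄ : G x₄ = 0) :
    ∃ y₁ y₂ y₃ y₄ : ℝ, y₁ < y₂ ∧ y₂ < y₃ ∧ y₃ < y₄ ∧
      y₁ ∈ Ico 0 T ∧ y₂ ∈ Ico 0 T ∧ y₃ ∈ Ico 0 T ∧ y₄ ∈ Ico 0 T ∧
      G y₁ = 0 ∧ G y₂ = 0 ∧ G y₃ = 0 ∧ G y₄ = 0 := by
  classical
  have hr : ∀ x, G (toIcoMod hT 0 x) = G x := fun x => by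
    rw [← self_sub_toIcoDiv_zsmul hT 0 x, hper.sub_zsmul_eq]
  set r := toIcoMod hT 0
  set s : Finset ℝ := {r x₁, r x₂, r x₃, r x₄}
  have hs : s.card = 4 := by
    have hne : ∀ {x y}, x < y → y < x + T → r x ≠ r y := toIcoMod_ne_of_lt_of_lt_add hT
    rw [Finset.card_insert_of_notMem, Finset.card_insert_of_notMem, Finset.card_pair]
    · exact hne h₃₄ (by linarith)
    · simp only [Finset.mem_insert, Finset.mem_singleton, not_or]
      exact ⟨hne h₂₃ (by linarith), hne (h₂₃.trans h₃₄) (by linarith)⟩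
    · simp only [Finset.mem_insert, Finset.mem_singleton, not_or]
      exact ⟨hne h₁₂ (by linarith), hne (h₁₂.trans h₂₃) (by linarith),
        hne (h₁₂.trans (h₂₃.trans h₃₄)) (by linarith)⟩
  have hmem : ∀ y ∈ s, y ∈ Ico 0 T ∧ G y = 0 := by
    simp only [s, Finset.mem_insert, Finset.mem_singleton]
    rintro y (rfl | rfl | rfl | rfl) <;> exact ⟨toIcoMod_mem_Ico' hT _, (hr _).trans ‹_›⟩
  set e := s.orderEmbOfFin hs
  have he : ∀ i, e i ∈ Ico 0 T ∧ G (e i) = 0 := fun i => hmem _ (s.orderEmbOfFin_mem hs i)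
  exact ⟨e 0, e 1, e 2, e 3, e.strictMono (by decide), e.strictMono (by decide),
    e.strictMono (by decide), (he 0).1, (he 1).1, (he 2).1, (he 3).1,
    (he 0).2, (he 1).2, (he 2).2, (he 3).2⟩

/-- If `F : ℝ → ℝ` is a C² function, `2π`-periodic with zero mean,
then `G = F'' + F`, if not identically zero, has at least four zeros
in `[0, 2π)`. -/
theorem four_zeros_of_Fpp_plus_F
    (F : ℝ → ℝ) (hF : ContDiff ℝ 2 F)
    (hper : Function.Periodic F (2 * π))
    (hmean : ∫ α in (0:ℝ)..(2 * π), F α = 0)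
    (G : ℝ → ℝ) (hG : ∀ α, G α = deriv (deriv F) α + F α)
    (hG0 : ¬ ∀ α, G α = 0) :
    ∃ x₁ x₂ x₃ x₄ : ℝ,
      x₁ < x₂ ∧ x₂ < x₃ ∧ x₃ < x₄ ∧
      x₁ ∈ Ico 0 (2 * π) ∧ x₂ ∈ Ico 0 (2 * π) ∧
      x₃ ∈ Ico 0 (2 * π) ∧ x₄ ∈ Ico 0 (2 * π) ∧
      G x₁ = 0 ∧ G x₂ = 0 ∧ G x₃ = 0 ∧ G x₄ = 0 := by
  obtain rfl : G = fun α => deriv (deriv F) α + F α := funext hG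
  have hcont : Continuous fun α => deriv (deriv F) α + F α :=
    ((hF.deriv' (n := 1)).continuous_deriv le_rfl).add hF.continuous
  have hperG : Periodic (fun α => deriv (deriv F) α + F α) (2 * π) := hper.deriv.deriv.add hper
  obtain ⟨x₁, x₂, x₃, x₄, h₁₂, h₂₃, h₃₄, h₄₁, hx₁, hx₂, hx₃, hx₄⟩ :=
    exists_four_zeros_of_orthogonal hcont hperG
      (intervalIntegral_deriv_deriv_add_mul_trig_eq_zero hF hper hmean) (not_forall.1 hG0)
  exact exists_four_zeros_Ico_of_window hperG two_pi_pos h₁₂ h₂₃ h₃₄ h₄₁ hx₁ hx₂ hx₃ hx₄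
end

section
/- Sturm–Hurwitz theorem: if f is a continuous 2π-periodic real function, not identically zero, whose Fourier series starts with harmonics of order n, i.e., f(x) = Σ_{k≥n} (a_k cos kx + b_k sin kx), then f has at least 2n zeros in [0, 2π). -/
open Real Set

/-- `f` changes sign at `z`. -/
def SC (f : ℝ → ℝ) (z : ℝ) : Prop :=
  ∃ δ > 0, ∀ u v : ℝ, u ∈ Ioo (z - δ) z → v ∈ Ioo z (z + δ) → f u * f v < 0

lemma sgn1 {a b c : ℝ} (h : 0 < a * b) : 0 < a * c ↔ 0 < b * c := by
  constructor <;> intro h' <;> nlinarith [sq_nonneg a, sq_nonneg b, mul_pos h h']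

lemma sgn2 {a b c : ℝ} (h : a * b < 0) : 0 < a * c ↔ b * c < 0 := by
  constructor <;> intro h' <;> nlinarith [sq_nonneg a, sq_nonneg b, sq_nonneg c]

lemma sgnABCD {a b c d : ℝ} (h1 : 0 < a * b) (h2 : b * c < 0) (h3 : 0 < c * d) : a * d < 0 := by
  nlinarith [mul_pos h1 h3]

lemma sameSign (f : ℝ → ℝ) (hf : Continuous f) {x y : ℝ} (hxy : x < y)
    (hx : f x ≠ 0) (hy : f y ≠ 0) (hz : ∀ z ∈ Ioo x y, f z ≠ 0) : 0 < f x * f y := by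
  rcases (mul_ne_zero hx hy).lt_or_gt with h | h
  · exfalso
    rcases mul_neg_iff.mp h with ⟨hx', hy'⟩ | ⟨hx', hy'⟩
    · obtain ⟨z, hzI, hz0⟩ := intermediate_value_Ioo' hxy.le hf.continuousOn
        (show (0:ℝ) ∈ Ioo (f y) (f x) from ⟨hy', hx'⟩)
      exact hz z hzI hz0
    · obtain ⟨z, hzI, hz0⟩ := intermediate_value_Ioo hxy.le hf.continuousOn
        (show (0:ℝ) ∈ Ioo (f x) (f y) from ⟨hx', hy'⟩)
      exact hz z hzI hz0
  · exact h

/-- The set of sign-change zeros of `f` in `(x,y)`. -/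
def SCZ (f : ℝ → ℝ) (x y : ℝ) : Set ℝ := {z | z ∈ Ioo x y ∧ f z = 0 ∧ SC f z}

lemma signB (f : ℝ → ℝ) (hf : Continuous f) :
    ∀ k : ℕ, ∀ x y : ℝ, x < y → f x ≠ 0 → f y ≠ 0 →
    ∀ hfin : {z | z ∈ Ioo x y ∧ f z = 0}.Finite, hfin.toFinset.card = k →
    (0 < f x * f y ↔ Even (SCZ f x y).ncard) := by
  intro k
  induction k with
  | zero =>
    intro x y hxy hx hy hfin hcard
    have hempty : ∀ z ∈ Ioo x y, f z ≠ 0 := by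
      intro z hz hz0
      have : z ∈ hfin.toFinset := by simp [Set.Finite.mem_toFinset]; exact ⟨hz, hz0⟩
      rw [Finset.card_eq_zero.mp hcard] at this
      simp at this
    have h1 : 0 < f x * f y := sameSign f hf hxy hx hy hempty
    have h2 : (SCZ f x y) = ∅ := by
      ext z; simp only [SCZ, Set.mem_setOf_eq, Set.mem_empty_iff_false, iff_false]
      rintro ⟨hz, hz0, -⟩; exact hempty z hz hz0
    rw [h2]
    simp [h1]
  | succ k IH =>
    intro x y hxy hx hy hfin hcard
    classical
    have hne : hfin.toFinset.Nonempty := by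
      rw [← Finset.card_pos, hcard]; omega
    set S := hfin.toFinset with hS
    set z₀ := S.min' hne with hz₀
    have hz₀mem : z₀ ∈ Ioo x y ∧ f z₀ = 0 :=
      hfin.mem_toFinset.mp (S.min'_mem hne)
    have hmin : ∀ s ∈ S, z₀ ≤ s := fun s hs => S.min'_le s hs
    -- the next zero (or y)
    set z' : ℝ := if h : (S.erase z₀).Nonempty then (S.erase z₀).min' h else y with hz'
    have hz'mem : z' ≤ y ∧ z₀ < z' := by
      rw [hz']
      split_ifs with h
      · have hmem := (S.erase z₀).min'_mem h
        have h1 := Finset.mem_of_mem_erase hmem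
        have h2 := Finset.ne_of_mem_erase hmem
        rw [Set.Finite.mem_toFinset] at h1
        exact ⟨h1.1.2.le, lt_of_le_of_ne (hmin _ (Finset.mem_of_mem_erase hmem)) (Ne.symm h2)⟩
      · exact ⟨le_refl y, hz₀mem.1.2⟩
    -- no zeros strictly between z₀ and z'
    have hgap : ∀ t, z₀ < t → t < z' → f t ≠ 0 := by
      intro t ht1 ht2 ht0
      have htI : t ∈ Ioo x y := ⟨hz₀mem.1.1.trans ht1, lt_of_lt_of_le ht2 hz'mem.1⟩
      have htS : t ∈ S := by rw [hS, Set.Finite.mem_toFinset]; exact ⟨htI, ht0⟩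
      have htE : t ∈ S.erase z₀ := Finset.mem_erase.mpr ⟨ne_of_gt ht1, htS⟩
      rw [hz'] at ht2
      rw [dif_pos ⟨t, htE⟩] at ht2
      exact absurd ((S.erase z₀).min'_le t htE) (not_le.mpr ht2)
    -- no zeros in (x, z₀)
    have hleft : ∀ t, x < t → t < z₀ → f t ≠ 0 := by
      intro t ht1 ht2 ht0
      have htS : t ∈ S := by
        rw [hS, Set.Finite.mem_toFinset]
        exact ⟨⟨ht1, ht2.trans hz₀mem.1.2⟩, ht0⟩
      exact absurd (hmin t htS) (not_le.mpr ht2)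
    set w := (z₀ + z') / 2 with hw
    have hw1 : z₀ < w := by rw [hw]; linarith [hz'mem.2]
    have hw2 : w < z' := by rw [hw]; linarith [hz'mem.2]
    have hwy : w < y := lt_of_lt_of_le hw2 hz'mem.1
    have hxw : x < w := hz₀mem.1.1.trans hw1
    have hfw : f w ≠ 0 := hgap w hw1 hw2
    -- key equivalence
    have hSCiff : SC f z₀ ↔ f x * f w < 0 := by
      constructor
      · rintro ⟨δ, hδ, hsc⟩
        set u := (max x (z₀ - δ) + z₀) / 2 with hu
        have hu1 : x < u := by
          rw [hu]; have := le_max_left x (z₀ - δ); have := hz₀mem.1.1; 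
          have hmlt : max x (z₀ - δ) < z₀ := max_lt hz₀mem.1.1 (by linarith)
          have := le_max_left x (z₀ - δ); linarith
        have hu2 : u < z₀ := by
          rw [hu]; have hmlt : max x (z₀ - δ) < z₀ := max_lt hz₀mem.1.1 (by linarith)
          linarith
        have hu3 : z₀ - δ < u := by
          rw [hu]; have := le_max_right x (z₀ - δ); linarith
        set v := (z₀ + min w (z₀ + δ)) / 2 with hv
        have hmgt : z₀ < min w (z₀ + δ) := lt_min hw1 (by linarith)
        have hv1 : z₀ < v := by rw [hv]; linarith
        have hv2 : v < w := by
          rw [hv]; have := min_le_left w (z₀ + δ); linarith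
        have hv3 : v < z₀ + δ := by
          rw [hv]; have := min_le_right w (z₀ + δ); linarith
        have huv : f u * f v < 0 := hsc u v ⟨hu3, hu2⟩ ⟨hv1, hv3⟩
        have hfu : f u ≠ 0 := hleft u hu1 hu2
        have hfv : f v ≠ 0 := hgap v hv1 (hv2.trans hw2)
        have hxu : 0 < f x * f u := sameSign f hf hu1 hx hfu
          (fun z hz => hleft z hz.1 (hz.2.trans hu2))
        have hvw : 0 < f v * f w := sameSign f hf hv2 hfv hfw
          (fun z hz => hgap z (hv1.trans hz.1) (hz.2.trans hw2))
        exact sgnABCD hxu huv hvw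
      · intro hneg
        refine ⟨min (z₀ - x) (w - z₀), lt_min (by linarith [hz₀mem.1.1]) (by linarith), ?_⟩
        intro u v hu hv
        have hu1 : x < u := by
          have := hu.1; have h2 := min_le_left (z₀ - x) (w - z₀); linarith
        have hu2 : u < z₀ := hu.2
        have hv1 : z₀ < v := hv.1
        have hv2 : v < w := by
          have := hv.2; have h2 := min_le_right (z₀ - x) (w - z₀); linarith
        have hfu : f u ≠ 0 := hleft u hu1 hu2
        have hfv : f v ≠ 0 := hgap v hv1 (hv2.trans hw2)
        have hxu : 0 < f u * f x := by
          rw [mul_comm]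
          exact sameSign f hf hu1 hx hfu (fun z hz => hleft z hz.1 (hz.2.trans hu2))
        have hvw : 0 < f w * f v := by
          rw [mul_comm]
          exact sameSign f hf hv2 hfv hfw (fun z hz => hgap z (hv1.trans hz.1) (hz.2.trans hw2))
        exact sgnABCD hxu hneg hvw
    -- the zero set on (w, y)
    have hfin2 : {z | z ∈ Ioo w y ∧ f z = 0}.Finite := by
      apply hfin.subset
      rintro z ⟨hz, hz0⟩
      exact ⟨⟨hxw.trans hz.1, hz.2⟩, hz0⟩
    have hsetE : hfin2.toFinset = S.erase z₀ := by
      ext z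
      rw [Set.Finite.mem_toFinset, Finset.mem_erase, hS, Set.Finite.mem_toFinset]
      constructor
      · rintro ⟨hz, hz0⟩
        exact ⟨ne_of_gt (hw1.trans hz.1), ⟨⟨hxw.trans hz.1, hz.2⟩, hz0⟩⟩
      · rintro ⟨hne', ⟨hz, hz0⟩⟩
        have hz₀lt : z₀ < z := lt_of_le_of_ne
          (hmin z (by rw [hS, Set.Finite.mem_toFinset]; exact ⟨hz, hz0⟩)) (Ne.symm hne')
        have : ¬ (z < z') := fun h => hgap z hz₀lt h hz0
        push_neg at this
        exact ⟨⟨lt_of_lt_of_le hw2 this, hz.2⟩, hz0⟩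
    have hcard2 : hfin2.toFinset.card = k := by
      rw [hsetE, Finset.card_erase_of_mem (S.min'_mem hne)]
      omega
    have IH' := IH w y hwy hfw hy hfin2 hcard2
    -- relate SCZ sets
    have hSCZfin : (SCZ f w y).Finite := hfin2.subset (fun z hz => ⟨hz.1, hz.2.1⟩)
    have hz₀notin : z₀ ∉ SCZ f w y := fun h => absurd h.1.1 (not_lt.mpr hw1.le)
    have hsplit : SCZ f x y = if SC f z₀ then insert z₀ (SCZ f w y) else SCZ f w y := by
      ext z
      constructor
      · rintro ⟨hzI, hz0, hsc⟩
        have hzS : z ∈ S := by rw [hS, Set.Finite.mem_toFinset]; exact ⟨hzI, hz0⟩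
        rcases eq_or_lt_of_le (hmin z hzS) with heq | hlt
        · rw [← heq] at hsc ⊢
          rw [if_pos hsc]
          exact Set.mem_insert _ _
        · have : ¬ (z < z') := fun h => hgap z hlt h hz0
          push_neg at this
          have hzwy : z ∈ SCZ f w y := ⟨⟨lt_of_lt_of_le hw2 this, hzI.2⟩, hz0, hsc⟩
          split_ifs
          · exact Set.mem_insert_of_mem _ hzwy
          · exact hzwy
      · intro hmem
        split_ifs at hmem with hsc
        · rcases Set.mem_insert_iff.mp hmem with heq | hmem'
          · rw [heq]; exact ⟨hz₀mem.1, hz₀mem.2, hsc⟩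
          · exact ⟨⟨hxw.trans hmem'.1.1, hmem'.1.2⟩, hmem'.2⟩
        · exact ⟨⟨hxw.trans hmem.1.1, hmem.1.2⟩, hmem.2⟩
    by_cases hsc : SC f z₀
    · rw [if_pos hsc] at hsplit
      have hcount : (SCZ f x y).ncard = (SCZ f w y).ncard + 1 := by
        rw [hsplit, Set.ncard_insert_of_notMem hz₀notin hSCZfin]
      rw [hcount, Nat.even_add_one, ← IH']
      have hxwneg : f x * f w < 0 := hSCiff.mp hsc
      rw [not_lt]
      constructor
      · intro h
        have := (sgn2 hxwneg).mp h
        rw [mul_comm] at this ⊢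
        linarith
      · intro h
        have hwyne : f w * f y ≠ 0 := mul_ne_zero hfw hy
        have hwylt : f w * f y < 0 := lt_of_le_of_ne h hwyne
        exact (sgn2 hxwneg).mpr hwylt
    · rw [if_neg hsc] at hsplit
      rw [hsplit, ← IH']
      have hxwpos : 0 < f x * f w := by
        have hne' : f x * f w ≠ 0 := mul_ne_zero hx hfw
        rcases hne'.lt_or_gt with h | h
        · exact absurd (hSCiff.mpr h) hsc
        · exact h
      exact sgn1 hxwpos

lemma SC_shift (f : ℝ → ℝ) {p : ℝ} (hper : Function.Periodic f p) (z : ℝ) (h : SC f z) :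
    SC f (z + p) := by
  obtain ⟨δ, hδ, hsc⟩ := h
  refine ⟨δ, hδ, fun u v hu hv => ?_⟩
  have := hsc (u - p) (v - p) ⟨by have := hu.1; linarith, by have := hu.2; linarith⟩
    ⟨by have := hv.1; linarith, by have := hv.2; linarith⟩
  rwa [hper.sub_eq, hper.sub_eq] at this

lemma intPos (g : ℝ → ℝ) (hg : Continuous g) (hnn : ∀ x ∈ Ioo 0 (2*π), 0 ≤ g x)
    (x₀ : ℝ) (hx₀ : x₀ ∈ Ioo 0 (2*π)) (hgx₀ : 0 < g x₀) :
    0 < ∫ x in (0:ℝ)..(2*π), g x := by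
  have h2π : (0:ℝ) < 2*π := by positivity
  have hnnIcc : ∀ x ∈ Icc 0 (2*π), 0 ≤ g x := by
    have hclosed : IsClosed {x : ℝ | 0 ≤ g x} := isClosed_le continuous_const hg
    intro x hx
    have : Icc 0 (2*π) ⊆ {x : ℝ | 0 ≤ g x} := by
      rw [← closure_Ioo (ne_of_lt h2π)]
      exact hclosed.closure_subset_iff.mpr hnn
    exact this hx
  obtain ⟨ε, hε, hball⟩ := Metric.isOpen_iff.mp (isOpen_lt continuous_const hg) x₀ hgx₀
  set u := max (x₀ - ε/2) 0 with hu
  set v := min (x₀ + ε/2) (2*π) with hv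
  have hu1 : 0 ≤ u := le_max_right _ _
  have huv1 : u < x₀ := max_lt (by linarith) hx₀.1
  have huv2 : x₀ < v := lt_min (by linarith) hx₀.2
  have hv2 : v ≤ 2*π := min_le_right _ _
  have hsub : ∀ t ∈ Ioo u v, 0 < g t := by
    intro t ht
    apply hball
    rw [Metric.mem_ball, Real.dist_eq, abs_lt]
    have h1 := lt_of_le_of_lt (le_max_left (x₀ - ε/2) 0) ht.1
    have h2 := lt_of_lt_of_le ht.2 (min_le_left (x₀ + ε/2) (2*π))
    constructor <;> linarith
  have hint : ∀ a b : ℝ, IntervalIntegrable g MeasureTheory.volume a b :=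
    fun a b => hg.intervalIntegrable a b
  rw [← intervalIntegral.integral_add_adjacent_intervals (hint 0 u) (hint u (2*π)),
    ← intervalIntegral.integral_add_adjacent_intervals (hint u v) (hint v (2*π))]
  have i1 : 0 ≤ ∫ x in (0:ℝ)..u, g x :=
    intervalIntegral.integral_nonneg hu1 (fun t ht => hnnIcc t ⟨ht.1, le_trans ht.2 (le_trans huv1.le (le_trans huv2.le hv2))⟩)
  have i3 : 0 ≤ ∫ x in v..(2*π), g x :=
    intervalIntegral.integral_nonneg hv2 (fun t ht => hnnIcc t ⟨le_trans hu1 (le_trans (le_trans huv1.le huv2.le) ht.1), ht.2⟩)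
  have i2 : 0 < ∫ x in u..v, g x :=
    intervalIntegral.intervalIntegral_pos_of_pos_on (hint u v) hsub (huv1.trans huv2)
  linarith

lemma sinPos {x c : ℝ} (hx1 : 0 < x) (hx2 : x < 2*π) (hc1 : 0 ≤ c) (hc2 : c < 2*π)
    (h : c < x) : 0 < Real.sin ((x - c)/2) :=
  Real.sin_pos_of_pos_of_lt_pi (by linarith) (by linarith)

lemma sinNeg {x c : ℝ} (hx1 : 0 < x) (hx2 : x < 2*π) (hc1 : 0 ≤ c) (hc2 : c < 2*π)
    (h : x < c) : Real.sin ((x - c)/2) < 0 := by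
  have : Real.sin ((x - c)/2) = -Real.sin ((c - x)/2) := by
    rw [← Real.sin_neg]; ring_nf
  rw [this, neg_lt, neg_zero]
  exact Real.sin_pos_of_pos_of_lt_pi (by linarith) (by linarith)

lemma prod_neg' {ι : Type*} (s : Finset ι) (f : ι → ℝ) :
    ∏ i ∈ s, (-f i) = (-1)^s.card * ∏ i ∈ s, f i := by
  rw [show ∏ i ∈ s, (-f i) = ∏ i ∈ s, ((-1) * f i) from Finset.prod_congr rfl (fun i _ => by ring),
    Finset.prod_mul_distrib, Finset.prod_const]

lemma pairSign (f : ℝ → ℝ) (hf : Continuous f)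
    (hfinZ : {z : ℝ | z ∈ Ico 0 (2*π) ∧ f z = 0}.Finite)
    (C : Finset ℝ) (hC : ∀ c, c ∈ C ↔ (c ∈ Ico 0 (2*π) ∧ f c = 0 ∧ SC f c))
    {x y : ℝ} (hx0 : 0 < x) (hxy : x < y) (hy2 : y < 2*π) (hfx : f x ≠ 0) (hfy : f y ≠ 0) :
    0 < (f x * ∏ c ∈ C, Real.sin ((x - c)/2)) * (f y * ∏ c ∈ C, Real.sin ((y - c)/2)) := by
  classical
  have hfinxy : {z | z ∈ Ioo x y ∧ f z = 0}.Finite := by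
    apply hfinZ.subset
    rintro z ⟨hz, hz0⟩
    exact ⟨⟨(hx0.trans hz.1).le, hz.2.trans hy2⟩, hz0⟩
  have hB := signB f hf hfinxy.toFinset.card x y hxy hfx hfy hfinxy rfl
  set Cin := C.filter (fun c => x < c ∧ c < y) with hCin
  have hSCZ : SCZ f x y = ↑Cin := by
    ext z
    simp only [SCZ, Set.mem_setOf_eq, hCin, Finset.coe_filter, hC z, Set.mem_Ico]
    constructor
    · rintro ⟨hz, hz0, hsc⟩
      exact ⟨⟨⟨(hx0.trans hz.1).le, hz.2.trans hy2⟩, hz0, hsc⟩, hz.1, hz.2⟩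
    · rintro ⟨⟨_, hz0, hsc⟩, h1, h2⟩
      exact ⟨⟨h1, h2⟩, hz0, hsc⟩
  rw [hSCZ, Set.ncard_coe_finset] at hB
  set s : ℝ → ℝ := fun c => Real.sin ((x - c)/2) * Real.sin ((y - c)/2) with hs
  have hprod : (f x * ∏ c ∈ C, Real.sin ((x - c)/2)) * (f y * ∏ c ∈ C, Real.sin ((y - c)/2))
      = (f x * f y) * ((∏ c ∈ Cin, s c) * ∏ c ∈ C.filter (fun c => ¬(x < c ∧ c < y)), s c) := by
    have key : ∏ c ∈ C, s c
        = (∏ c ∈ C, Real.sin ((x - c)/2)) * ∏ c ∈ C, Real.sin ((y - c)/2) := by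
      simp only [hs]; exact Finset.prod_mul_distrib
    rw [Finset.prod_filter_mul_prod_filter_not C (fun c => x < c ∧ c < y) s, key]
    ring
  have hCprops : ∀ c ∈ C, (0 ≤ c ∧ c < 2*π) ∧ f c = 0 := by
    intro c hc
    obtain ⟨h1, h2, -⟩ := (hC c).mp hc
    exact ⟨⟨h1.1, h1.2⟩, h2⟩
  have houtpos : 0 < ∏ c ∈ C.filter (fun c => ¬(x < c ∧ c < y)), s c := by
    apply Finset.prod_pos
    intro c hc
    rw [Finset.mem_filter] at hc
    obtain ⟨⟨hc1, hc2⟩, hc0⟩ := hCprops c hc.1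
    have hcx : c ≠ x := fun h => hfx (h ▸ hc0)
    have hcy : c ≠ y := fun h => hfy (h ▸ hc0)
    have : c < x ∨ y < c := by
      rcases not_and_or.mp hc.2 with h | h
      · exact Or.inl (lt_of_le_of_ne (not_lt.mp h) hcx)
      · exact Or.inr (lt_of_le_of_ne (not_lt.mp h) (Ne.symm hcy))
    rcases this with h | h
    · exact mul_pos (sinPos hx0 (hxy.trans hy2) hc1 hc2 h)
        (sinPos (hx0.trans hxy) hy2 hc1 hc2 (h.trans hxy))
    · exact mul_pos_of_neg_of_neg (sinNeg hx0 (hxy.trans hy2) hc1 hc2 (hxy.trans h))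
        (sinNeg (hx0.trans hxy) hy2 hc1 hc2 h)
  have hinneg : ∀ c ∈ Cin, s c < 0 := by
    intro c hc
    rw [hCin, Finset.mem_filter] at hc
    obtain ⟨⟨hc1, hc2⟩, hc0⟩ := hCprops c hc.1
    exact mul_neg_of_neg_of_pos (sinNeg hx0 (hxy.trans hy2) hc1 hc2 hc.2.1)
      (sinPos (hx0.trans hxy) hy2 hc1 hc2 hc.2.2)
  have hinprod : ∏ c ∈ Cin, s c = (-1)^Cin.card * ∏ c ∈ Cin, (-(s c)) := by
    rw [prod_neg' Cin s, ← mul_assoc,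
      show ((-1:ℝ))^Cin.card * (-1)^Cin.card = 1 from by
        rw [← pow_add]; exact Even.neg_one_pow ⟨Cin.card, rfl⟩,
      one_mul]
  have hposneg : 0 < ∏ c ∈ Cin, (-(s c)) :=
    Finset.prod_pos (fun c hc => neg_pos.mpr (hinneg c hc))
  rw [hprod]
  by_cases heven : Even Cin.card
  · have h1 : 0 < f x * f y := hB.mpr heven
    have h2 : 0 < ∏ c ∈ Cin, s c := by
      rw [hinprod, heven.neg_one_pow, one_mul]; exact hposneg
    exact mul_pos h1 (mul_pos h2 houtpos)
  · have h1 : f x * f y < 0 := by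
      have hne : f x * f y ≠ 0 := mul_ne_zero hfx hfy
      rcases hne.lt_or_gt with h | h
      · exact h
      · exact absurd (hB.mp h) heven
    have h2 : ∏ c ∈ Cin, s c < 0 := by
      rw [hinprod, (Nat.not_even_iff_odd.mp heven).neg_one_pow]
      linarith
    have := mul_pos (mul_pos_of_neg_of_neg h1 h2) houtpos
    linarith [this, mul_assoc (f x * f y) (∏ c ∈ Cin, s c) (∏ c ∈ C.filter (fun c => ¬(x < c ∧ c < y)), s c)]

lemma evenC (f : ℝ → ℝ) (hf : Continuous f) (hper : Function.Periodic f (2*π))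
    (hfinZ : {z : ℝ | z ∈ Ico 0 (2*π) ∧ f z = 0}.Finite)
    (C : Finset ℝ) (hC : ∀ c, c ∈ C ↔ (c ∈ Ico 0 (2*π) ∧ f c = 0 ∧ SC f c))
    {a : ℝ} (ha : a ∈ Ioo 0 (2*π)) (hfa : f a ≠ 0) :
    Even C.card := by
  classical
  have hfin3 : {z | z ∈ Ioo (a - 2*π) a ∧ f z = 0}.Finite := by
    apply Set.Finite.subset (hfinZ.union (hfinZ.image (fun t => t - 2*π)))
    rintro z ⟨hz, hz0⟩
    by_cases h0 : 0 ≤ z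
    · exact Or.inl ⟨⟨h0, hz.2.trans ha.2⟩, hz0⟩
    · refine Or.inr ⟨z + 2*π, ⟨⟨by linarith [ha.1, hz.1], by linarith [not_le.mp h0]⟩, ?_⟩, by ring⟩
      rw [hper z]; exact hz0
  have hBa := signB f hf hfin3.toFinset.card (a - 2*π) a (by have := Real.pi_pos; linarith)
    (by rw [hper.sub_eq]; exact hfa) hfa hfin3 rfl
  have hEv : Even (SCZ f (a - 2*π) a).ncard := by
    apply hBa.mp
    rw [hper.sub_eq]
    exact mul_self_pos.mpr hfa
  set φ : ℝ → ℝ := fun z => if z < 0 then z + 2*π else z with hφ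
  have himg : φ '' (SCZ f (a - 2*π) a) = ↑C := by
    ext w
    constructor
    · rintro ⟨z, ⟨hzI, hz0, hsc⟩, rfl⟩
      rw [Finset.mem_coe, hC]
      by_cases hz : z < 0
      · rw [hφ]; simp only [if_pos hz]
        refine ⟨⟨by linarith [ha.1, hzI.1], by linarith⟩, ?_, SC_shift f hper z hsc⟩
        rw [hper z]; exact hz0
      · rw [hφ]; simp only [if_neg hz]
        exact ⟨⟨not_lt.mp hz, hzI.2.trans ha.2⟩, hz0, hsc⟩
    · intro hw
      rw [Finset.mem_coe, hC] at hw
      obtain ⟨hwIco, hw0, hwSC⟩ := hw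
      have hwa : w ≠ a := fun h => hfa (h ▸ hw0)
      rcases lt_or_gt_of_ne hwa with h | h
      · refine ⟨w, ⟨⟨by linarith [hwIco.1, ha.2], h⟩, hw0, hwSC⟩, ?_⟩
        rw [hφ]; simp only [if_neg (not_lt.mpr hwIco.1)]
      · refine ⟨w - 2*π, ⟨⟨by linarith [hwIco.2], by linarith [ha.1, hwIco.2]⟩, ?_, ?_⟩, ?_⟩
        · rw [hper.sub_eq]; exact hw0
        · have := SC_shift f hper.neg w hwSC
          rwa [show w + -(2*π) = w - 2*π by ring] at this
        · rw [hφ]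
          simp only [if_pos (show w - 2*π < 0 by linarith [hwIco.2, ha.1])]
          ring
  have hinj : Set.InjOn φ (SCZ f (a - 2*π) a) := by
    intro z1 h1 z2 h2 heq
    have hz1 := h1.1
    have hz2 := h2.1
    rw [hφ] at heq
    simp only at heq
    split_ifs at heq with c1 c2 c2
    · linarith
    · exfalso; linarith [hz1.1, hz2.2]
    · exfalso; linarith [hz2.1, hz1.2]
    · exact heq
  have hcount : (C.card : ℕ) = (SCZ f (a - 2*π) a).ncard := by
    rw [← Set.ncard_coe_finset, ← himg, Set.ncard_image_of_injOn hinj]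
  rw [hcount]
  exact hEv

open intervalIntegral Complex in

lemma expInt (f : ℝ → ℝ) (n : ℕ) (hf : Continuous f)
    (hcos : ∀ k : ℕ, k < n → ∫ x in (0:ℝ)..(2 * π), f x * Real.cos (k * x) = 0)
    (hsin : ∀ k : ℕ, k < n → ∫ x in (0:ℝ)..(2 * π), f x * Real.sin (k * x) = 0)
    (m : ℤ) (hm : m.natAbs < n) :
    ∫ x in (0:ℝ)..(2 * π), (f x : ℂ) * Complex.exp (m * x * Complex.I) = 0 := by
  have key : ∀ x : ℝ, (f x : ℂ) * Complex.exp (m * x * Complex.I)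
      = ((f x * Real.cos (m * x) : ℝ) : ℂ) + ((f x * Real.sin (m * x) : ℝ) : ℂ) * Complex.I := by
    intro x
    have : ((m : ℂ) * x) = ((m * x : ℝ) : ℂ) := by push_cast; ring
    rw [this, Complex.exp_mul_I, ← Complex.ofReal_cos, ← Complex.ofReal_sin]
    push_cast; ring
  simp only [key]
  rw [intervalIntegral.integral_add, intervalIntegral.integral_mul_const,
    intervalIntegral.integral_ofReal, intervalIntegral.integral_ofReal]
  · have hmk : ((m:ℝ)) = (m.natAbs : ℝ) ∨ ((m:ℝ)) = -(m.natAbs : ℝ) := by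
      rcases Int.natAbs_eq m with h | h
      · left
        have := congrArg (fun z : ℤ => (z:ℝ)) h
        simpa only [Int.cast_natCast, Int.cast_neg] using this
      · right
        have := congrArg (fun z : ℤ => (z:ℝ)) h
        simpa only [Int.cast_natCast, Int.cast_neg] using this
    have hc : ∫ x in (0:ℝ)..(2 * π), f x * Real.cos (m * x) = 0 := by
      rcases hmk with h | h
      · simp only [h]; exact hcos m.natAbs hm
      · have : ∀ x : ℝ, f x * Real.cos ((m:ℝ) * x) = f x * Real.cos ((m.natAbs:ℝ) * x) := by
          intro x; rw [h, show (-(m.natAbs:ℝ) * x) = -((m.natAbs:ℝ) * x) by ring, Real.cos_neg]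
        simp only [this]; exact hcos m.natAbs hm
    have hs : ∫ x in (0:ℝ)..(2 * π), f x * Real.sin (m * x) = 0 := by
      rcases hmk with h | h
      · simp only [h]; exact hsin m.natAbs hm
      · have : ∀ x : ℝ, f x * Real.sin ((m:ℝ) * x) = -(f x * Real.sin ((m.natAbs:ℝ) * x)) := by
          intro x; rw [h, show (-(m.natAbs:ℝ) * x) = -((m.natAbs:ℝ) * x) by ring, Real.sin_neg]; ring
        simp only [this]
        rw [intervalIntegral.integral_neg, hsin m.natAbs hm, neg_zero]
    rw [hc, hs]; simp
  · apply Continuous.intervalIntegrable; continuity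
  · apply Continuous.intervalIntegrable
    apply Continuous.mul _ continuous_const
    continuity

open intervalIntegral Complex in

lemma prodZero (f : ℝ → ℝ) (n : ℕ) (hf : Continuous f)
    (hexp : ∀ m : ℤ, m.natAbs < n →
      ∫ x in (0:ℝ)..(2 * π), (f x : ℂ) * Complex.exp (m * x * Complex.I) = 0)
    (C : Finset ℝ) (heven : Even C.card) (hlt : C.card < 2 * n) :
    ∫ x in (0:ℝ)..(2 * π), f x * ∏ c ∈ C, Real.sin ((x - c)/2) = 0 := by
  classical
  obtain ⟨r, hr⟩ := heven
  have hrn : r < n := by omega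
  set A : ℝ → ℂ := fun c => -(Complex.I/2) * Complex.exp (-(c:ℂ) * Complex.I / 2) with hA
  set B : ℝ → ℂ := fun c => (Complex.I/2) * Complex.exp ((c:ℂ) * Complex.I / 2) with hB
  set coef : Finset ℝ → ℂ := fun t => (∏ c ∈ t, A c) * (∏ c ∈ C \ t, B c) with hcoef
  set μ : Finset ℝ → ℤ := fun t => (t.card : ℤ) - (r : ℤ) with hμ
  have factor : ∀ x c : ℝ, (Complex.sin (((x - c)/2 : ℝ) : ℂ))
      = A c * Complex.exp ((x:ℂ) * Complex.I / 2) + B c * Complex.exp (-(x:ℂ) * Complex.I / 2) := by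
    intro x c
    have hz : (((x - c)/2 : ℝ) : ℂ) = ((x:ℂ) - (c:ℂ))/2 := by push_cast; ring
    rw [hz, show Complex.sin (((x:ℂ) - c)/2)
        = (Complex.exp (-(((x:ℂ) - c)/2) * Complex.I) - Complex.exp ((((x:ℂ) - c)/2) * Complex.I)) * Complex.I / 2
        from rfl,
      show (-(((x:ℂ) - c)/2) * Complex.I) = (-(x:ℂ) * Complex.I / 2) + ((c:ℂ) * Complex.I / 2) by ring,
      show ((((x:ℂ) - c)/2) * Complex.I) = ((x:ℂ) * Complex.I / 2) + (-(c:ℂ) * Complex.I / 2) by ring,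
      Complex.exp_add, Complex.exp_add]
    simp only [hA, hB]; ring
  have term : ∀ x : ℝ, ∀ t ∈ C.powerset,
      (∏ c ∈ t, (A c * Complex.exp ((x:ℂ) * Complex.I / 2)))
        * (∏ c ∈ C \ t, (B c * Complex.exp (-(x:ℂ) * Complex.I / 2)))
      = coef t * Complex.exp ((μ t : ℂ) * x * Complex.I) := by
    intro x t ht
    rw [Finset.mem_powerset] at ht
    have hsle : t.card ≤ C.card := Finset.card_le_card ht
    rw [Finset.prod_mul_distrib (f := A), Finset.prod_mul_distrib (f := B), Finset.prod_const, Finset.prod_const,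
      Finset.card_sdiff_of_subset ht, ← Complex.exp_nat_mul, ← Complex.exp_nat_mul]
    have : ((t.card : ℂ) * ((x:ℂ) * Complex.I / 2)) + ((C.card - t.card : ℕ) : ℂ) * (-(x:ℂ) * Complex.I / 2)
        = (μ t : ℂ) * x * Complex.I := by
      rw [Nat.cast_sub hsle, hμ]
      push_cast [hr]
      ring
    rw [← this, Complex.exp_add, hcoef]
    ring
  have integrand : ∀ x : ℝ, ((f x * ∏ c ∈ C, Real.sin ((x - c)/2) : ℝ) : ℂ)
      = ∑ t ∈ C.powerset, coef t * ((f x : ℂ) * Complex.exp ((μ t : ℂ) * x * Complex.I)) := by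
    intro x
    rw [Complex.ofReal_mul, Complex.ofReal_prod]
    simp only [Complex.ofReal_sin]
    calc (f x : ℂ) * ∏ c ∈ C, Complex.sin (((x - c)/2 : ℝ) : ℂ)
        = (f x : ℂ) * ∏ c ∈ C, (A c * Complex.exp ((x:ℂ) * Complex.I / 2)
            + B c * Complex.exp (-(x:ℂ) * Complex.I / 2)) := by
          congr 1; exact Finset.prod_congr rfl fun c _ => factor x c
      _ = (f x : ℂ) * ∑ t ∈ C.powerset, coef t * Complex.exp ((μ t : ℂ) * x * Complex.I) := by
          rw [Finset.prod_add]; congr 1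
          exact Finset.sum_congr rfl (term x)
      _ = ∑ t ∈ C.powerset, coef t * ((f x : ℂ) * Complex.exp ((μ t : ℂ) * x * Complex.I)) := by
          rw [Finset.mul_sum]; exact Finset.sum_congr rfl fun t _ => by ring
  have hC : (↑(∫ x in (0:ℝ)..(2 * π), f x * ∏ c ∈ C, Real.sin ((x - c)/2)) : ℂ) = 0 := by
    rw [← intervalIntegral.integral_ofReal]
    simp only [integrand]
    rw [intervalIntegral.integral_finset_sum]
    · apply Finset.sum_eq_zero
      intro t ht
      rw [intervalIntegral.integral_const_mul]
      have hnat : (μ t).natAbs < n := by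
        have h1 : t.card ≤ C.card := Finset.card_le_card (Finset.mem_powerset.mp ht)
        simp only [hμ]
        omega
      rw [hexp (μ t) hnat, mul_zero]
    · intro t ht
      exact (continuous_const.mul ((Complex.continuous_ofReal.comp hf).mul
        (Complex.continuous_exp.comp ((continuous_const.mul Complex.continuous_ofReal).mul
          continuous_const)))).intervalIntegrable _ _
  exact Complex.ofReal_eq_zero.mp hC

/-- Sturm–Hurwitz theorem: a continuous `2π`-periodic function
whose Fourier coefficients of all orders `k < n` vanish, and which is not
identically zero, has at least `2n` zeros in `[0, 2π)`. -/
theorem sturm_hurwitz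
    (f : ℝ → ℝ) (n : ℕ)
    (hf : Continuous f)
    (hper : Function.Periodic f (2 * π))
    (hcos : ∀ k : ℕ, k < n → ∫ x in (0:ℝ)..(2 * π), f x * Real.cos (k * x) = 0)
    (hsin : ∀ k : ℕ, k < n → ∫ x in (0:ℝ)..(2 * π), f x * Real.sin (k * x) = 0)
    (hne : ∃ x, f x ≠ 0) :
    ∃ S : Finset ℝ, S.card = 2 * n ∧ ∀ x ∈ S, x ∈ Ico 0 (2 * π) ∧ f x = 0 := by
  classical
  have h2π : (0:ℝ) < 2 * π := by positivity
  by_cases hinfin : {x : ℝ | x ∈ Ico 0 (2 * π) ∧ f x = 0}.Infinite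
  · obtain ⟨S, hsub, hcardS⟩ := hinfin.exists_subset_card_eq (2 * n)
    exact ⟨S, hcardS, fun x hx => hsub hx⟩
  · have hfinZ : {x : ℝ | x ∈ Ico 0 (2 * π) ∧ f x = 0}.Finite := Set.not_infinite.mp hinfin
    by_cases hge : 2 * n ≤ hfinZ.toFinset.card
    · obtain ⟨S, hsub, hcardS⟩ := Finset.exists_subset_card_eq hge
      refine ⟨S, hcardS, fun x hx => ?_⟩
      have := hsub hx
      rwa [Set.Finite.mem_toFinset] at this
    · exfalso
      push_neg at hge
      -- find a point in (0, 2π) where f is nonzero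
      have hexa : ∃ a, a ∈ Ioo 0 (2 * π) ∧ f a ≠ 0 := by
        obtain ⟨x₁, hx₁⟩ := hne
        have hmem := toIcoMod_mem_Ico h2π 0 x₁
        rw [zero_add] at hmem
        have hfa₀ : f (toIcoMod h2π 0 x₁) = f x₁ := by
          rw [show toIcoMod h2π 0 x₁ = x₁ - toIcoDiv h2π 0 x₁ • (2 * π) from rfl]
          exact hper.sub_zsmul_eq _
        rcases eq_or_lt_of_le hmem.1 with h0 | h0
        · have hf0 : f 0 ≠ 0 := by
            have h' : f (toIcoMod h2π 0 x₁) ≠ 0 := by rw [hfa₀]; exact hx₁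
            rwa [← h0] at h'
          have hopen : IsOpen {t : ℝ | f t ≠ 0} := by
            have : {t : ℝ | f t ≠ 0} = f ⁻¹' ({0}ᶜ) := rfl
            rw [this]
            exact (isOpen_compl_singleton).preimage hf
          obtain ⟨ε, hε, hball⟩ := Metric.isOpen_iff.mp hopen 0 hf0
          have hm1 : (0:ℝ) < min (ε/2) 1 := lt_min (by linarith) one_pos
          refine ⟨min (ε/2) 1, ⟨hm1, ?_⟩, ?_⟩
          · have h1 : min (ε/2) 1 ≤ 1 := min_le_right _ _
            have := Real.pi_gt_three
            linarith
          · apply hball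
            rw [Metric.mem_ball, Real.dist_eq, sub_zero, abs_of_pos hm1]
            have := min_le_left (ε/2) 1
            linarith
        · exact ⟨_, ⟨h0, hmem.2⟩, by rw [hfa₀]; exact hx₁⟩
      obtain ⟨a, haI, hfa⟩ := hexa
      set C := hfinZ.toFinset.filter (SC f) with hCdef
      have hCiff : ∀ c, c ∈ C ↔ (c ∈ Ico 0 (2 * π) ∧ f c = 0 ∧ SC f c) := by
        intro c
        rw [hCdef, Finset.mem_filter, Set.Finite.mem_toFinset]
        constructor
        · rintro ⟨⟨h1, h2⟩, h3⟩; exact ⟨h1, h2, h3⟩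
        · rintro ⟨h1, h2, h3⟩; exact ⟨⟨h1, h2⟩, h3⟩
      have hCeven := evenC f hf hper hfinZ C hCiff haI hfa
      have hClt : C.card < 2 * n := lt_of_le_of_lt (Finset.card_filter_le _ _) hge
      have hzero := prodZero f n hf (expInt f n hf hcos hsin) C hCeven hClt
      have hTcont : Continuous (fun x => ∏ c ∈ C, Real.sin ((x - c)/2)) := by
        apply continuous_finset_prod
        intro c _
        exact Real.continuous_sin.comp (by continuity)
      have hTa : (∏ c ∈ C, Real.sin ((a - c)/2)) ≠ 0 := by
        apply Finset.prod_ne_zero_iff.mpr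
        intro c hc
        obtain ⟨hcI, hc0, -⟩ := (hCiff c).mp hc
        have hca : c ≠ a := fun h => hfa (h ▸ hc0)
        rcases lt_or_gt_of_ne hca with h | h
        · exact ne_of_gt (sinPos haI.1 haI.2 hcI.1 hcI.2 h)
        · exact ne_of_lt (sinNeg haI.1 haI.2 hcI.1 hcI.2 h)
      set K := f a * ∏ c ∈ C, Real.sin ((a - c)/2) with hK
      have hnn : ∀ x ∈ Ioo 0 (2 * π),
          0 ≤ K * (f x * ∏ c ∈ C, Real.sin ((x - c)/2)) := by
        intro x hx
        by_cases hfx : f x = 0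
        · rw [hfx, zero_mul, mul_zero]
        · rcases lt_trichotomy a x with h | h | h
          · exact (pairSign f hf hfinZ C hCiff haI.1 h hx.2 hfa hfx).le
          · rw [← h, ← hK]
            exact (mul_self_pos.mpr (mul_ne_zero hfa hTa)).le
          · have := pairSign f hf hfinZ C hCiff hx.1 h haI.2 hfx hfa
            rw [hK]
            nlinarith [this]
      have hga : 0 < K * (f a * ∏ c ∈ C, Real.sin ((a - c)/2)) := by
        rw [hK]
        exact mul_self_pos.mpr (mul_ne_zero hfa hTa)
      have hgcont : Continuous (fun x => K * (f x * ∏ c ∈ C, Real.sin ((x - c)/2))) :=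
        continuous_const.mul (hf.mul hTcont)
      have hposint := intPos _ hgcont hnn a haI hga
      rw [intervalIntegral.integral_const_mul, hzero, mul_zero] at hposint
      exact lt_irrefl 0 hposint
end
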